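/- Let 0 ≤ l < k ≤ n and let λ = (λ_1, …, λ_n) ∈ Γ_k with λ_1 < 0. Then σ_{k−1}(λ|1)σ_l(λ) − σ_k(λ)σ_{l−1}(λ|1) ≥ (n/k)·((k−l)/(n−l))·σ_{k−1}(λ)σ_l(λ). (Inequality chain (2.9) in the proof of Lemma 2.5.) -/

import Mathlib

open Finset

noncomputable def esymm {n : ℕ} (lam : Fin n → ℝ) (m : ℤ) : ℝ :=
  if m < 0 then 0
  else ∑ s ∈ Finset.powersetCard m.toNat Finset.univ, ∏ i ∈ s, lam i

noncomputable def esymmDel {n : ℕ} (lam : Fin n → ℝ) (i : Fin n) (m : ℤ) : ℝ :=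
  if m < 0 then 0
  else ∑ s ∈ Finset.powersetCard m.toNat (Finset.univ.erase i), ∏ j ∈ s, lam j

noncomputable def esymmDelSet {n : ℕ} (lam : Fin n → ℝ) (S : Finset (Fin n)) (m : ℤ) : ℝ :=
  if m < 0 then 0
  else ∑ s ∈ Finset.powersetCard m.toNat (Finset.univ \ S), ∏ j ∈ s, lam j

def GardingCone (n k : ℕ) : Set (Fin n → ℝ) :=
  {lam | ∀ m : ℕ, 1 ≤ m → m ≤ k → 0 < esymm lam (m : ℤ)}

noncomputable def sigmaMat {n : ℕ} (A : Matrix (Fin n) (Fin n) ℝ) (m : ℤ) : ℝ :=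
  if m < 0 then 0
  else ∑ s ∈ Finset.powersetCard m.toNat (Finset.univ : Finset (Fin n)),
    (A.submatrix (fun i : {x : Fin n // x ∈ s} => (i : Fin n))
                 (fun j : {x : Fin n // x ∈ s} => (j : Fin n))).det

/-!
Write `λ = λ₁ ::ₘ μ`. Since `σ_m(λ) = σ_m(μ) + λ₁ σ_{m-1}(μ)`, the `λ₁`-terms cancel on the left-hand
side, which becomes `σ_{k-1}(μ) σ_l(μ) - σ_k(μ) σ_{l-1}(μ)`, and since `λ₁ < 0`, induction on `m`
gives `0 < σ_m(λ) ≤ σ_m(μ)` for `m ≤ k`. Newton's inequalities `E_{j-1} E_{j+1} ≤ E_j²` for the means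
`E_j = σ_j / C(N, j)` make `E_{j+1} / E_j` nonincreasing as long as the `E_j` are positive, which
yields `k (n - l) σ_k(μ) σ_{l-1}(μ) ≤ l (n - k) σ_{k-1}(μ) σ_l(μ)`: this is the claimed bound with
`σ(λ)` on the right replaced by the larger `σ(μ)`.

Newton's inequalities go by induction on the number `N` of variables: by Rolle's theorem the
derivative of `∏ (X - xᵢ)` again has only real roots, and these have the same means `E_j` for
`j < N`. This leaves the case `N = j + 1`, where `σ_j² - 2 σ_{j+1} σ_{j-1} = σ_j(x²)` and
Cauchy–Schwarz gives `σ_j² ≤ N σ_j(x²)`.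
-/

open Polynomial

theorem Polynomial.card_roots_derivative_eq_natDegree_sub_one {p : ℝ[X]}
    (hp : Multiset.card p.roots = p.natDegree) :
    Multiset.card (derivative p).roots = p.natDegree - 1 ∧
      (derivative p).natDegree = p.natDegree - 1 := by
  have h₁ := card_roots_le_derivative p
  have h₂ := card_roots' (derivative p)
  have h₃ := natDegree_derivative_le p
  omega

theorem mul_le_mul_of_mul_le_sq {a : ℕ → ℝ} (ha : ∀ j, a j * a (j + 2) ≤ a (j + 1) ^ 2)
    {l k : ℕ} (hlk : l ≤ k) (hpos : ∀ j ≤ k, 0 < a j) : a (k + 1) * a l ≤ a k * a (l + 1) := by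
  induction k, hlk using Nat.le_induction with
  | base => rw [mul_comm]
  | succ k hlk ih =>
    have ih := ih fun j hj ↦ hpos j (by omega)
    have hl : 0 ≤ a l := (hpos l (by omega)).le
    have hk1 : 0 ≤ a (k + 1) := (hpos (k + 1) le_rfl).le
    refine le_of_mul_le_mul_left ?_ (hpos k (by omega))
    calc a k * (a (k + 2) * a l) = a k * a (k + 2) * a l := by ring
      _ ≤ a (k + 1) ^ 2 * a l := mul_le_mul_of_nonneg_right (ha k) hl
      _ = a (k + 1) * (a (k + 1) * a l) := by ring
      _ ≤ a (k + 1) * (a k * a (l + 1)) := mul_le_mul_of_nonneg_left ih hk1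
      _ = a k * (a (k + 1) * a (l + 1)) := by ring

namespace Multiset

section CommSemiring

variable {R : Type*} [CommSemiring R]

theorem esymm_cons_succ (a : R) (s : Multiset R) (m : ℕ) :
    (a ::ₘ s).esymm (m + 1) = s.esymm (m + 1) + a * s.esymm m := by
  simp [esymm, powersetCard_cons, map_map, sum_map_mul_left]

theorem esymm_eq_zero_of_card_lt {s : Multiset R} {m : ℕ} (h : card s < m) : s.esymm m = 0 := by
  simp [esymm, powersetCard_eq_empty m h]

theorem esymm_card (s : Multiset R) : s.esymm (card s) = s.prod := by
  simp [esymm, powersetCard_self]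

theorem esymm_zero (s : Multiset R) : s.esymm 0 = 1 := by
  simp [esymm]

end CommSemiring

theorem esymm_sq_sub_two_mul_eq_esymm_map_sq {R : Type*} [CommRing R] {m : ℕ} {s : Multiset R}
    (hs : card s = m + 2) :
    s.esymm (m + 1) ^ 2 - 2 * (s.esymm (m + 2) * s.esymm m) = (s.map (· ^ 2)).esymm (m + 1) := by
  induction m generalizing s with
  | zero =>
    obtain ⟨x, y, rfl⟩ := card_eq_two.mp hs
    rw [insert_eq_cons, map_cons, map_singleton, esymm_pair_one, esymm_pair_one, esymm_pair_two,
      esymm_zero]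
    ring
  | succ m ih =>
    obtain ⟨a, ha⟩ := card_pos_iff_exists_mem.mp (by omega : 0 < card s)
    obtain ⟨t, rfl⟩ := exists_cons_of_mem ha
    rw [card_cons, add_left_inj] at hs
    have htop : (t.map (· ^ 2)).esymm (m + 2) = t.esymm (m + 2) ^ 2 := by
      have hmap : card (t.map (· ^ 2)) = m + 2 := by rw [card_map, hs]
      rw [← hmap, esymm_card, hmap, ← hs, esymm_card, prod_map_pow, map_id']
    rw [map_cons, esymm_cons_succ, esymm_cons_succ, esymm_cons_succ, esymm_cons_succ,
      esymm_eq_zero_of_card_lt (by omega : card t < m + 3), htop, ← ih hs]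
    ring

theorem sq_sum_le_card_mul_sum_sq {R : Type*} [CommSemiring R] [LinearOrder R]
    [IsStrictOrderedRing R] [ExistsAddOfLE R] (x : Multiset R) :
    x.sum ^ 2 ≤ card x * (x.map (· ^ 2)).sum := by
  have h := _root_.sq_sum_le_card_mul_sum_sq (s := x.toEnumFinset) (f := Prod.fst)
  have hsq : x.toEnumFinset.val.map (fun p ↦ p.1 ^ 2) = x.map (· ^ 2) := by
    conv_rhs => rw [← map_toEnumFinset_fst x, map_map]
    rfl
  rwa [Finset.sum_eq_multiset_sum, Finset.sum_eq_multiset_sum, map_toEnumFinset_fst, hsq,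
    card_toEnumFinset] at h

theorem esymm_map_sq {R : Type*} [CommSemiring R] (s : Multiset R) (m : ℕ) :
    (s.map (· ^ 2)).esymm m = ((s.powersetCard m).map fun t ↦ t.prod ^ 2).sum := by
  simp [esymm, powersetCard_map, map_map, prod_map_pow]

theorem esymm_sq_le_choose_mul_esymm_map_sq {R : Type*} [CommSemiring R] [LinearOrder R]
    [IsStrictOrderedRing R] [ExistsAddOfLE R] (s : Multiset R) (m : ℕ) :
    s.esymm m ^ 2 ≤ (card s).choose m * (s.map (· ^ 2)).esymm m := by
  have h := sq_sum_le_card_mul_sum_sq ((s.powersetCard m).map prod)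
  rwa [card_map, card_powersetCard, map_map, Function.comp_def, ← esymm_map_sq] at h

/-- For `m > card s` numerator and denominator both vanish and the value is `0`. -/
noncomputable def esymmMean (s : Multiset ℝ) (m : ℕ) : ℝ := s.esymm m / (card s).choose m

theorem esymmMean_mul_esymmMean_le_sq_of_card_eq {m : ℕ} {s : Multiset ℝ} (hs : card s = m + 2) :
    s.esymmMean m * s.esymmMean (m + 2) ≤ s.esymmMean (m + 1) ^ 2 := by
  have hCS := esymm_sq_le_choose_mul_esymm_map_sq s (m + 1)
  rw [← esymm_sq_sub_two_mul_eq_esymm_map_sq hs, hs, Nat.choose_succ_self_right] at hCS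
  have hchoose : ((m + 2).choose m : ℝ) = (m + 2) * (m + 1) / 2 := by
    rw [Nat.choose_symm_of_eq_add (by ring : m + 2 = m + 2), Nat.cast_choose_two]
    push_cast; ring
  rw [esymmMean, esymmMean, esymmMean, hs, hchoose, Nat.choose_self, Nat.choose_succ_self_right]
  push_cast at hCS ⊢
  rw [div_mul_div_comm, div_pow, div_le_div_iff₀ (by positivity) (by positivity)]
  nlinarith [mul_le_mul_of_nonneg_left hCS (by positivity : (0 : ℝ) ≤ m + 2)]

/-- `t` is the multiset of roots of `(∏ a ∈ s, (X - a))'`, all real by Rolle's theorem. -/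
theorem exists_card_eq_and_sub_mul_esymm_eq {N : ℕ} {s : Multiset ℝ}
    (hs : card s = N + 1) :
    ∃ t : Multiset ℝ, card t = N ∧
      ∀ m ≤ N, ((N : ℝ) + 1 - m) * s.esymm m = (N + 1) * t.esymm m := by
  set p := (s.map fun a ↦ X - C a).prod
  have hp_monic : p.Monic := monic_multiset_prod_of_monic _ _ fun a _ ↦ monic_X_sub_C a
  have hp_roots : p.roots = s := roots_multiset_prod_X_sub_C s
  have hp_deg : p.natDegree = N + 1 := by
    rw [natDegree_multiset_prod_X_sub_C_eq_card, hs]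
  obtain ⟨hq_card, hq_deg⟩ := card_roots_derivative_eq_natDegree_sub_one (hp_roots ▸ hp_deg ▸ hs)
  rw [hp_deg, Nat.add_sub_cancel] at hq_card hq_deg
  set q := derivative p
  have hq_lead : q.leadingCoeff = N + 1 := by
    rw [leadingCoeff, hq_deg, coeff_derivative, ← hp_deg, hp_monic.coeff_natDegree, one_mul]
  refine ⟨q.roots, hq_card, fun m hm ↦ ?_⟩
  have hp_coeff := coeff_eq_esymm_roots_of_card (hp_roots ▸ hp_deg ▸ hs)
    (show N - m + 1 ≤ p.natDegree by omega)
  have hq_coeff := coeff_eq_esymm_roots_of_card (hq_card.trans hq_deg.symm)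
    (show N - m ≤ q.natDegree by omega)
  rw [coeff_derivative, hp_coeff, hp_monic.leadingCoeff, hp_roots, hp_deg,
    show N + 1 - (N - m + 1) = m by omega] at hq_coeff
  rw [hq_lead, hq_deg, show N - (N - m) = m by omega] at hq_coeff
  have hcast : ((N - m : ℕ) : ℝ) + 1 = (N : ℝ) + 1 - m := by
    rw [Nat.cast_sub hm]; ring
  rw [hcast] at hq_coeff
  have hsign : ((-1 : ℝ) ^ m) ≠ 0 := pow_ne_zero _ (by norm_num)
  apply mul_left_cancel₀ hsign
  linear_combination hq_coeff

theorem exists_esymmMean_eq_of_card_eq_succ {N : ℕ} {s : Multiset ℝ} (hs : card s = N + 1) :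
    ∃ t : Multiset ℝ, card t = N ∧ ∀ m ≤ N, s.esymmMean m = t.esymmMean m := by
  obtain ⟨t, ht, hst⟩ := exists_card_eq_and_sub_mul_esymm_eq hs
  refine ⟨t, ht, fun m hm ↦ ?_⟩
  have hchoose : ((N.choose m : ℕ) : ℝ) * (N + 1) = (N + 1).choose m * ((N : ℝ) + 1 - m) := by
    have h := Nat.choose_mul_succ_eq N m
    rw [← Nat.cast_inj (R := ℝ), Nat.cast_mul, Nat.cast_mul, Nat.cast_sub (by omega)] at h
    push_cast at h
    exact h
  rw [esymmMean, esymmMean, hs, ht,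
    div_eq_div_iff (by exact_mod_cast (Nat.choose_pos (by omega)).ne')
      (by exact_mod_cast (Nat.choose_pos hm).ne')]
  apply mul_left_cancel₀ (by positivity : (N : ℝ) + 1 ≠ 0)
  linear_combination s.esymm m * hchoose + ((N + 1).choose m : ℝ) * hst m hm

theorem esymmMean_eq_zero_of_card_lt {s : Multiset ℝ} {m : ℕ} (h : card s < m) :
    s.esymmMean m = 0 := by
  rw [esymmMean, esymm_eq_zero_of_card_lt h, zero_div]

theorem esymmMean_mul_esymmMean_le_sq (s : Multiset ℝ) (m : ℕ) :
    s.esymmMean m * s.esymmMean (m + 2) ≤ s.esymmMean (m + 1) ^ 2 := by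
  obtain hlt | hge := lt_or_ge (card s) (m + 2)
  · rw [esymmMean_eq_zero_of_card_lt hlt, mul_zero]
    positivity
  generalize hN : card s = N at hge
  induction N, hge using Nat.le_induction generalizing s with
  | base => exact esymmMean_mul_esymmMean_le_sq_of_card_eq hN
  | succ N hmN ih =>
    obtain ⟨t, ht, hst⟩ := exists_esymmMean_eq_of_card_eq_succ hN
    rw [hst m (by omega), hst (m + 1) (by omega), hst (m + 2) (by omega)]
    exact ih t ht

theorem esymm_eq_esymmMean_mul_choose (s : Multiset ℝ) {m : ℕ} (hm : m ≤ card s) :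
    s.esymm m = s.esymmMean m * (card s).choose m :=
  (div_mul_cancel₀ _ (by exact_mod_cast (Nat.choose_pos hm).ne')).symm

theorem mul_esymm_mul_esymm_le {s : Multiset ℝ} {l k : ℕ} (hlk : l ≤ k) (hk : k < card s)
    (hpos : ∀ j ≤ k, 0 < s.esymm j) :
    (k + 1) * (card s - l) * (s.esymm (k + 1) * s.esymm l) ≤
      (l + 1) * (card s - k) * (s.esymm k * s.esymm (l + 1)) := by
  set N := card s
  have hE := mul_le_mul_of_mul_le_sq (esymmMean_mul_esymmMean_le_sq s) hlk fun j hj ↦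
    div_pos (hpos j hj) (by exact_mod_cast Nat.choose_pos (by omega))
  have hchoose : ∀ j < N, ((j : ℝ) + 1) * N.choose (j + 1) = (N - j) * N.choose j := fun j hj ↦ by
    have h := Nat.choose_succ_right_eq N j
    rw [← Nat.cast_inj (R := ℝ), Nat.cast_mul, Nat.cast_mul, Nat.cast_sub hj.le] at h
    push_cast at h
    linear_combination h
  have hNk : (0 : ℝ) ≤ N - k := sub_nonneg.mpr (by exact_mod_cast hk.le)
  have hNl : (0 : ℝ) ≤ N - l := sub_nonneg.mpr (by exact_mod_cast (hlk.trans hk.le))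
  rw [esymm_eq_esymmMean_mul_choose s (m := k + 1) (by omega),
    esymm_eq_esymmMean_mul_choose s (m := l) (by omega),
    esymm_eq_esymmMean_mul_choose s (m := k) (by omega),
    esymm_eq_esymmMean_mul_choose s (m := l + 1) (by omega)]
  calc _ = (N - k) * N.choose k * ((N - l) * N.choose l) *
          (s.esymmMean (k + 1) * s.esymmMean l) := by
        linear_combination (N - l) * N.choose l * s.esymmMean (k + 1) * s.esymmMean l *
          hchoose k hk
    _ ≤ (N - k) * N.choose k * ((N - l) * N.choose l) *
          (s.esymmMean k * s.esymmMean (l + 1)) :=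
        mul_le_mul_of_nonneg_left hE (by positivity)
    _ = _ := by
        linear_combination -(N - k) * N.choose k * s.esymmMean k * s.esymmMean (l + 1) *
          hchoose l (by omega)

section NegativeHead

variable {a : ℝ} {s : Multiset ℝ} {k : ℕ}

theorem esymm_pos_of_cons_of_neg (ha : a < 0) (hs : ∀ j ≤ k, 0 < (a ::ₘ s).esymm j) :
    ∀ j ≤ k, 0 < s.esymm j := by
  intro j hj
  induction j with
  | zero => rw [esymm_zero]; exact one_pos
  | succ j ih =>
    have h := hs (j + 1) hj
    rw [esymm_cons_succ] at h
    nlinarith [ih (by omega)]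

theorem esymm_cons_le_of_neg (ha : a < 0) (hs : ∀ j ≤ k, 0 < (a ::ₘ s).esymm j) :
    ∀ j ≤ k, (a ::ₘ s).esymm j ≤ s.esymm j := by
  rintro (_ | j) hj
  · rw [esymm_zero, esymm_zero]
  · rw [esymm_cons_succ]
    nlinarith [esymm_pos_of_cons_of_neg ha hs j (by omega)]

theorem mul_esymm_cons_le_sub_of_neg (ha : a < 0) {l : ℕ} (hlk : l < k)
    (hs : ∀ j ≤ k + 1, 0 < (a ::ₘ s).esymm j) :
    (card s + 1) / (k + 1) * ((k - l) / (card s - l)) *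
        ((a ::ₘ s).esymm k * (a ::ₘ s).esymm (l + 1)) ≤
      s.esymm k * (a ::ₘ s).esymm (l + 1) - (a ::ₘ s).esymm (k + 1) * s.esymm l := by
  have hpos := esymm_pos_of_cons_of_neg ha hs
  have hle := esymm_cons_le_of_neg ha hs
  have hk : k < card s := by
    by_contra! h
    exact (hpos (k + 1) le_rfl).ne' (esymm_eq_zero_of_card_lt (by omega))
  have hmaclaurin := mul_esymm_mul_esymm_le hlk.le hk fun j hj ↦ hpos j (by omega)
  have hcancel : s.esymm k * (a ::ₘ s).esymm (l + 1) - (a ::ₘ s).esymm (k + 1) * s.esymm l =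
      s.esymm k * s.esymm (l + 1) - s.esymm (k + 1) * s.esymm l := by
    rw [esymm_cons_succ, esymm_cons_succ]
    ring
  have hkl : (0 : ℝ) < k - l := sub_pos.mpr (by exact_mod_cast hlk)
  have hsl : (0 : ℝ) < card s - l := sub_pos.mpr (by exact_mod_cast hlk.trans hk)
  rw [hcancel]
  calc _ ≤ (card s + 1) / (k + 1) * ((k - l) / (card s - l)) *
        (s.esymm k * s.esymm (l + 1)) := by
        gcongr
        · exact (hs (l + 1) (by omega)).le
        · exact (hpos k (by omega)).le
        · exact hle k (by omega)
        · exact hle (l + 1) (by omega)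
    _ ≤ _ := by
        rw [div_mul_div_comm, div_mul_eq_mul_div, div_le_iff₀ (by positivity)]
        linarith

end NegativeHead

end Multiset

theorem esymm_natCast {n : ℕ} (lam : Fin n → ℝ) (m : ℕ) :
    esymm lam m = (univ.val.map lam).esymm m := by
  rw [esymm, if_neg (by omega), Int.toNat_natCast, Finset.esymm_map_val]

theorem esymmDel_natCast {n : ℕ} (lam : Fin n → ℝ) (i : Fin n) (m : ℕ) :
    esymmDel lam i m = ((univ.erase i).val.map lam).esymm m := by
  rw [esymmDel, if_neg (by omega), Int.toNat_natCast, Finset.esymm_map_val]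

theorem univ_val_map_eq_cons {α β : Type*} [Fintype α] [DecidableEq α] (f : α → β) (i : α) :
    univ.val.map f = f i ::ₘ (univ.erase i).val.map f := by
  rw [Finset.erase_val, ← Multiset.map_cons, Multiset.cons_erase (mem_univ_val i)]

theorem esymm_pos_of_mem_gardingCone {n k : ℕ} {lam : Fin n → ℝ} (hlam : lam ∈ GardingCone n k) :
    ∀ j ≤ k, 0 < (univ.val.map lam).esymm j := by
  rintro (_ | j) hj
  · rw [Multiset.esymm_zero]
    exact one_pos
  · rw [← esymm_natCast]
    exact hlam (j + 1) (by omega) hj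

/-- Inequality (2.9): if 0 ≤ l < k ≤ n, λ ∈ Γ_k and λ₁ < 0, then
σ_{k−1}(λ|1)σ_l(λ) − σ_k(λ)σ_{l−1}(λ|1) ≥ (n/k)·((k−l)/(n−l))·σ_{k−1}(λ)σ_l(λ). -/
theorem deriv_quotient_first_ge_sigma (n k l : ℕ) (hlk : l < k) (hkn : k ≤ n)
    (lam : Fin n → ℝ) (hlam : lam ∈ GardingCone n k)
    (hneg : lam ⟨0, by omega⟩ < 0) :
    esymmDel lam ⟨0, by omega⟩ ((k : ℤ) - 1) * esymm lam (l : ℤ)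
      - esymm lam (k : ℤ) * esymmDel lam ⟨0, by omega⟩ ((l : ℤ) - 1)
    ≥ ((n : ℝ) / k) * (((k : ℝ) - l) / ((n : ℝ) - l)) *
        (esymm lam ((k : ℤ) - 1) * esymm lam (l : ℤ)) := by
  set i : Fin n := ⟨0, by omega⟩
  set μ := (univ.erase i).val.map lam
  have hcard : Multiset.card μ + 1 = n := by
    rw [Multiset.card_map, ← Finset.card_def, card_erase_of_mem (mem_univ i), card_univ,
      Fintype.card_fin]
    omega
  have hcons : univ.val.map lam = lam i ::ₘ μ := univ_val_map_eq_cons lam i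
  have hΓ : ∀ j ≤ k, 0 < (lam i ::ₘ μ).esymm j := hcons ▸ esymm_pos_of_mem_gardingCone hlam
  obtain ⟨k, rfl⟩ : ∃ k', k = k' + 1 := ⟨k - 1, by omega⟩
  have hk : ((k + 1 : ℕ) : ℤ) - 1 = k := by push_cast; ring
  rcases l with _ | l
  · have hn : (n : ℝ) ≠ 0 := Nat.cast_ne_zero.mpr (by omega)
    have hdel : esymmDel lam i ((0 : ℕ) - 1 : ℤ) = 0 := if_pos (by norm_num)
    rw [hk, hdel]
    simp only [esymm_natCast, esymmDel_natCast, hcons, Multiset.esymm_zero]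
    convert Multiset.esymm_cons_le_of_neg hneg hΓ k (by omega) using 1
    · rw [mul_one, mul_zero, sub_zero]
    · push_cast
      field_simp
      ring
  · have hl : ((l + 1 : ℕ) : ℤ) - 1 = l := by push_cast; ring
    rw [hk, hl]
    simp only [esymm_natCast, esymmDel_natCast, hcons]
    convert Multiset.mul_esymm_cons_le_sub_of_neg hneg (l := l) (by omega) hΓ using 2
    rw [← hcard]
    push_cast
    ring
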